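/- arXiv:2303.07712 — 3 statements merged into one kernel-verified Lean document; each statement's English description precedes it below -/
import Mathlib

section
/- If c ∈ A is a non-zero-divisor, then the image of c under the canonical map A → A[{M_i/a_i}_{i∈I}] is a non-zero-divisor. -/
open scoped TensorProduct

noncomputable section

variable {A : Type*} [CommRing A] {I : Type*}

/-- The multiplicative submonoid generated by the elements `a_i` of the multi-center. -/
def dilSubmonoid (a : I → A) : Submonoid A := Submonoid.closure (Set.range a)

lemma a_mem_dilSubmonoid (a : I → A) (i : I) : a i ∈ dilSubmonoid a :=
  Submonoid.subset_closure ⟨i, rfl⟩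

/-- `a^ν` for `ν ∈ ⊕_{i∈I} ℕ`. -/
def apow (a : I → A) (ν : I →₀ ℕ) : A := ν.prod fun i n => a i ^ n

lemma apow_mem (a : I → A) (ν : I →₀ ℕ) : apow a ν ∈ dilSubmonoid a :=
  Submonoid.prod_mem _ fun i _ => pow_mem (a_mem_dilSubmonoid a i) _

/-- The product ideal `L^ν = ∏_i (M_i + (a_i))^{ν_i}`. -/
def Lpow (M : I → Ideal A) (a : I → A) (ν : I →₀ ℕ) : Ideal A :=
  ν.prod fun i n => (M i + Ideal.span {a i}) ^ n

/-- The fraction `m / a_i` in the localization at the submonoid generated by the `a_i`. -/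
def dilFrac (a : I → A) (i : I) (m : A) : Localization (dilSubmonoid a) :=
  Localization.mk m ⟨a i, a_mem_dilSubmonoid a i⟩

/-- The multi-centered dilatation `A[{M_i/a_i}]`, realized as the sub-`A`-algebra of the
localization `S⁻¹A` generated by the fractions `m / a_i` with `m ∈ M_i`. -/
def dilatation (M : I → Ideal A) (a : I → A) :
    Subalgebra A (Localization (dilSubmonoid a)) :=
  Algebra.adjoin A (⋃ i, dilFrac a i '' (M i))

lemma Subalgebra.algebraMap_mem_nonZeroDivisors {R B : Type*} [CommSemiring R] [Semiring B]
    [Algebra R B] (S : Subalgebra R B) {c : R} (hc : algebraMap R B c ∈ nonZeroDivisors B) :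
    algebraMap R S c ∈ nonZeroDivisors S :=
  mem_nonZeroDivisors_of_injective (f := S.val) Subtype.val_injective hc

/-- the image of a non-zero-divisor of `A` in the dilatation is a
non-zero-divisor. -/
theorem stmt8 (M : I → Ideal A) (a : I → A) (c : A) (hc : c ∈ nonZeroDivisors A) :
    algebraMap A ↥(dilatation M a) c ∈ nonZeroDivisors ↥(dilatation M a) :=
  (dilatation M a).algebraMap_mem_nonZeroDivisors
    (IsLocalization.nonZeroDivisors_le_comap (dilSubmonoid a) _ hc)
end
end

section
/- Base change of dilatations: let f : A → B be a ring morphism, N_i = f(M_i)·B and b_i = f(a_i). Then B[{N_i/b_i}_{i∈I}] is isomorphic to the quotient of B ⊗_A A[{M_i/a_i}_{i∈I}] by the ideal of elements annihilated by some b^ν with ν ∈ ⊕_I ℕ. -/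
/-!
Every element of `A[{M_i/a_i}] ⊆ S⁻¹A` becomes a scalar after multiplication by some `a^ν`, and
this persists after the base change `B ⊗_A -`. Hence an element `y` of the tensor product that
maps to `0` in `B[{N_i/b_i}] ⊆ T⁻¹B` satisfies `b^ν y = β ⊗ 1` with `β` vanishing in `T⁻¹B`,
i.e. `y` is `b^ν`-torsion; conversely each `b^ν` is invertible in `T⁻¹B`. Surjectivity holds
because `f(m)/b_i` is the image of `m/a_i`, and `w ↦ w/b_i` is `B`-linear, so it suffices to
hit the generators `f(m)` of `N_i = f(M_i)B`.
-/

open scoped TensorProduct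

noncomputable section

variable {A : Type*} [CommRing A] {I : Type*}

set_option synthInstance.maxHeartbeats 1000000
set_option maxHeartbeats 1000000


/-- The canonical map between localizations induced by the ring morphism `algebraMap A B`. -/
def locMapBase (a : I → A) (B : Type*) [CommRing B] [Algebra A B] :
    Localization (dilSubmonoid a) →+*
      Localization (dilSubmonoid fun i => algebraMap A B (a i)) :=
  IsLocalization.map (M := dilSubmonoid a)
    (T := dilSubmonoid fun i => algebraMap A B (a i))
    (Localization (dilSubmonoid fun i => algebraMap A B (a i))) (algebraMap A B)
    (Submonoid.closure_le.mpr (by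
      rintro x ⟨i, rfl⟩
      exact a_mem_dilSubmonoid (fun i => algebraMap A B (a i)) i))

lemma Subalgebra.exists_smul_mem_range_of_isLocalization {R L : Type*} [CommRing R] [CommRing L]
    [Algebra R L] (T : Submonoid R) [IsLocalization T L] (S : Subalgebra R L) (x : S) :
    ∃ t ∈ T, t • x ∈ Set.range (algebraMap R S) := by
  obtain ⟨⟨r, t⟩, h⟩ := IsLocalization.surj T (x : L)
  exact ⟨t, t.2, r, Subtype.ext (by simp [Algebra.smul_def, h, mul_comm])⟩

lemma TensorProduct.exists_smul_mem_range_algebraMap {R B D : Type*} [CommRing R] [CommRing B]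
    [CommRing D] [Algebra R B] [Algebra R D] (T : Submonoid R)
    (hD : ∀ x : D, ∃ t ∈ T, t • x ∈ Set.range (algebraMap R D)) (y : B ⊗[R] D) :
    ∃ t ∈ T, t • y ∈ Set.range (algebraMap B (B ⊗[R] D)) := by
  let P := (⊥ : Subalgebra B (B ⊗[R] D)).restrictScalars R
  suffices ∃ t ∈ T, t • y ∈ P by simpa [P, Algebra.mem_bot] using this
  induction y using TensorProduct.induction_on with
  | zero => exact ⟨1, T.one_mem, by simp⟩
  | tmul c x =>
    obtain ⟨t, ht, r, hr⟩ := hD x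
    refine ⟨t, ht, Algebra.mem_bot.2 ⟨r • c, ?_⟩⟩
    rw [Algebra.TensorProduct.algebraMap_apply, Algebra.algebraMap_self_apply,
      TensorProduct.smul_tmul, ← Algebra.algebraMap_eq_smul_one, hr, TensorProduct.tmul_smul]
  | add y z hy hz =>
    obtain ⟨s, hs, hsy⟩ := hy
    obtain ⟨t, ht, htz⟩ := hz
    refine ⟨t * s, T.mul_mem ht hs, ?_⟩
    rw [smul_add, mul_smul, mul_comm, mul_smul]
    exact P.add_mem (P.smul_mem hsy t) (P.smul_mem htz s)

lemma AlgHom.eq_zero_iff_of_isLocalization {B E L : Type*} [CommRing B] [CommRing E]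
    [Algebra B E] [CommRing L] [Algebra B L] (T : Submonoid B) [IsLocalization T L] (g : E →ₐ[B] L)
    (hE : ∀ y : E, ∃ t ∈ T, t • y ∈ Set.range (algebraMap B E)) (y : E) :
    g y = 0 ↔ ∃ t ∈ T, t • y = 0 := by
  constructor
  · intro hy
    obtain ⟨t, ht, β, hβ⟩ := hE y
    have hβ0 : algebraMap B L β = 0 := by rw [← g.commutes, hβ, map_smul, hy, smul_zero]
    obtain ⟨⟨s, hs⟩, hsβ⟩ := (IsLocalization.map_eq_zero_iff T L β).1 hβ0
    refine ⟨s * t, T.mul_mem hs ht, ?_⟩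
    rw [mul_smul, ← hβ, Algebra.smul_def, ← map_mul, hsβ, map_zero]
  · rintro ⟨t, ht, hty⟩
    have : algebraMap B L t * g y = 0 := by rw [← Algebra.smul_def, ← map_smul, hty, map_zero]
    exact (IsLocalization.map_units L ⟨t, ht⟩).mul_right_eq_zero.1 this

lemma mem_dilSubmonoid_iff {a : I → A} {s : A} : s ∈ dilSubmonoid a ↔ ∃ ν, apow a ν = s := by
  simp only [dilSubmonoid, Submonoid.mem_closure_range_iff, apow, eq_comm]

lemma map_dilSubmonoid {B : Type*} [CommRing B] (f : A →+* B) (a : I → A) :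
    (dilSubmonoid a).map f = dilSubmonoid fun i => f (a i) := by
  rw [dilSubmonoid, MonoidHom.map_mclosure, ← Set.range_comp]
  rfl

lemma dilFrac_mem_dilatation {M : I → Ideal A} {a : I → A} {i : I} {m : A} (hm : m ∈ M i) :
    dilFrac a i m ∈ dilatation M a :=
  Algebra.subset_adjoin (Set.mem_iUnion.2 ⟨i, m, hm, rfl⟩)

lemma dilatation_le_iff {M : I → Ideal A} {a : I → A}
    {S : Subalgebra A (Localization (dilSubmonoid a))} :
    dilatation M a ≤ S ↔ ∀ i, ∀ m ∈ M i, dilFrac a i m ∈ S := by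
  simp only [dilatation, Algebra.adjoin_le_iff, Set.iUnion_subset_iff, Set.image_subset_iff]
  rfl

lemma dilFrac_eq_smul (a : I → A) (i : I) (m : A) : dilFrac a i m = m • dilFrac a i 1 := by
  rw [dilFrac, dilFrac, Localization.smul_mk, smul_eq_mul, mul_one]

lemma dilFrac_mem_of_mem_map {B : Type*} [CommRing B] (f : A →+* B) {J : Ideal A} {b : I → B}
    {i : I} {S : Subalgebra B (Localization (dilSubmonoid b))}
    (hS : ∀ m ∈ J, dilFrac b i (f m) ∈ S) {w : B} (hw : w ∈ J.map f) : dilFrac b i w ∈ S := by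
  let K : Ideal B :=
    (Subalgebra.toSubmodule S).comap (LinearMap.toSpanSingleton B _ (dilFrac b i 1))
  have hK : ∀ w, w ∈ K ↔ dilFrac b i w ∈ S := fun w => by
    rw [dilFrac_eq_smul]
    rfl
  have hJ : J ≤ K.comap f := fun m hm => (hK _).2 (hS m hm)
  exact (hK w).1 (Ideal.map_le_iff_le_comap.2 hJ hw)

section BaseChange

variable (B : Type*) [CommRing B] [Algebra A B]

lemma locMapBase_algebraMap (a : I → A) (r : A) :
    locMapBase a B (algebraMap A _ r) = algebraMap B _ (algebraMap A B r) :=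
  IsLocalization.map_eq _ r

lemma locMapBase_dilFrac (a : I → A) (i : I) (m : A) :
    locMapBase a B (dilFrac a i m)
      = dilFrac (fun i => algebraMap A B (a i)) i (algebraMap A B m) := by
  rw [dilFrac, dilFrac, Localization.mk_eq_mk', Localization.mk_eq_mk', locMapBase]
  exact IsLocalization.map_mk' _ _ _

def locMapBaseAlgHom (a : I → A) :
    Localization (dilSubmonoid a) →ₐ[A]
      Localization (dilSubmonoid fun i => algebraMap A B (a i)) :=
  { locMapBase a B with commutes' := locMapBase_algebraMap B a }

lemma locMapBase_mem_dilatation (M : I → Ideal A) (a : I → A)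
    {x : Localization (dilSubmonoid a)} (hx : x ∈ dilatation M a) :
    locMapBase a B x ∈
      dilatation (fun i => (M i).map (algebraMap A B)) (fun i => algebraMap A B (a i)) := by
  refine dilatation_le_iff (S := Subalgebra.comap (locMapBaseAlgHom B a)
    (Subalgebra.restrictScalars A (dilatation (fun i => (M i).map (algebraMap A B))
      (fun i => algebraMap A B (a i))))).2 (fun i m hm => ?_) hx
  change locMapBase a B (dilFrac a i m) ∈ dilatation _ _
  rw [locMapBase_dilFrac]
  exact dilFrac_mem_dilatation (Ideal.mem_map_of_mem _ hm)

def dilatationMap (M : I → Ideal A) (a : I → A) :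
    dilatation M a →ₐ[A]
      dilatation (fun i => (M i).map (algebraMap A B)) (fun i => algebraMap A B (a i)) :=
  ((locMapBaseAlgHom B a).comp (dilatation M a).val).codRestrict (Subalgebra.restrictScalars A
    (dilatation (fun i => (M i).map (algebraMap A B)) (fun i => algebraMap A B (a i))))
    fun x => locMapBase_mem_dilatation B M a x.2

def dilatationBaseChange (M : I → Ideal A) (a : I → A) :
    B ⊗[A] dilatation M a →ₐ[B]
      dilatation (fun i => (M i).map (algebraMap A B)) (fun i => algebraMap A B (a i)) :=
  Algebra.TensorProduct.lift (Algebra.ofId B _) (dilatationMap B M a) fun _ _ => .all _ _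

variable (M : I → Ideal A) (a : I → A)

lemma dilatationBaseChange_one_tmul (x : dilatation M a) :
    (dilatationBaseChange B M a (1 ⊗ₜ x) :
        Localization (dilSubmonoid fun i => algebraMap A B (a i))) = locMapBase a B x := by
  rw [dilatationBaseChange, Algebra.TensorProduct.lift_tmul, map_one, one_mul]
  rfl

lemma dilatationBaseChange_surjective : Function.Surjective (dilatationBaseChange B M a) := by
  set g := dilatationBaseChange B M a
  have hle : dilatation (fun i => (M i).map (algebraMap A B)) (fun i => algebraMap A B (a i))
      ≤ g.range.map (Subalgebra.val _) := by
    refine dilatation_le_iff.2 fun i w hw =>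
      dilFrac_mem_of_mem_map (algebraMap A B) (fun m hm => ?_) hw
    refine Subalgebra.mem_map.2
      ⟨_, g.mem_range_self (1 ⊗ₜ ⟨_, dilFrac_mem_dilatation (i := i) hm⟩), ?_⟩
    exact (dilatationBaseChange_one_tmul B M a _).trans (locMapBase_dilFrac B a i m)
  intro z
  obtain ⟨_, ⟨y, rfl⟩, hy⟩ := hle z.2
  exact ⟨y, Subtype.ext hy⟩

lemma dilatationBaseChange_eq_zero_iff (y : B ⊗[A] dilatation M a) :
    dilatationBaseChange B M a y = 0 ↔ ∃ ν : I →₀ ℕ,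
      algebraMap B (B ⊗[A] dilatation M a) (apow (fun i => algebraMap A B (a i)) ν) * y = 0 := by
  have hE : ∀ y : B ⊗[A] dilatation M a, ∃ t ∈ dilSubmonoid fun i => algebraMap A B (a i),
      t • y ∈ Set.range (algebraMap B (B ⊗[A] dilatation M a)) := fun y => by
    obtain ⟨t, ht, hty⟩ := TensorProduct.exists_smul_mem_range_algebraMap _
      ((dilatation M a).exists_smul_mem_range_of_isLocalization (dilSubmonoid a)) y
    refine ⟨algebraMap A B t, ?_, by rwa [algebraMap_smul]⟩
    rw [← map_dilSubmonoid]
    exact Submonoid.mem_map_of_mem _ ht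
  rw [← ZeroMemClass.coe_eq_zero, ← Subalgebra.val_apply, ← AlgHom.comp_apply,
    AlgHom.eq_zero_iff_of_isLocalization _ _ hE]
  simp only [mem_dilSubmonoid_iff, Algebra.smul_def, exists_exists_eq_and]

end BaseChange

/-- base change: `B[{f(M_i)B / f(a_i)}]` is the quotient of
`B ⊗_A A[{M_i/a_i}]` by the ideal of elements annihilated by some `b^ν`. -/
theorem stmt13 {B : Type*} [CommRing B] [Algebra A B] (M : I → Ideal A) (a : I → A) :
    ∃ g : (B ⊗[A] ↥(dilatation M a)) →ₐ[B]
        ↥(dilatation (fun i => (M i).map (algebraMap A B))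
            (fun i => algebraMap A B (a i))),
      Function.Surjective g ∧
      (∀ x : ↥(dilatation M a),
        ((g (1 ⊗ₜ[A] x) :
            Localization (dilSubmonoid fun i => algebraMap A B (a i))))
          = locMapBase a B ((x : Localization (dilSubmonoid a)))) ∧
      ∀ y, g y = 0 ↔ ∃ ν : I →₀ ℕ,
        algebraMap B (B ⊗[A] ↥(dilatation M a))
            (apow (fun i => algebraMap A B (a i)) ν) * y = 0 :=
  ⟨dilatationBaseChange B M a, dilatationBaseChange_surjective B M a,
    dilatationBaseChange_one_tmul B M a, dilatationBaseChange_eq_zero_iff B M a⟩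
end
end

section
/- Let a, g_1, …, g_n be a regular sequence in a commutative ring A and let d_1, …, d_n be positive integers. Then the dilatation A[(g_1)/a^{d_1}, …, (g_n)/a^{d_n}] is isomorphic as an A-algebra to A[x_1,…,x_n]/(g_1 − a^{d_1}x_1, …, g_n − a^{d_n}x_n); in particular the latter quotient ring has no a-power torsion. -/
open scoped TensorProduct

noncomputable section

variable {A : Type*} [CommRing A] {I : Type*}

set_option synthInstance.maxHeartbeats 1000000
set_option maxHeartbeats 1000000


/-- The ideal generated by the elements of the sequence `a, g_1, …, g_n` preceding index `k`. -/
def prevIdeal (n : ℕ) (a : A) (g : Fin n → A) (k : Fin (n + 1)) : Ideal A :=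
  Ideal.span {x | ∃ j, j < k ∧ x = Fin.cases a g j}

/-- The ideal of relations `(g_1 − a^{d_1}x_1, …, g_n − a^{d_n}x_n)`. -/
def relIdeal (n : ℕ) (a : A) (g : Fin n → A) (d : Fin n → ℕ) :
    Ideal (MvPolynomial (Fin n) A) :=
  Ideal.span (Set.range fun i =>
    MvPolynomial.C (g i) - MvPolynomial.C (a ^ d i) * MvPolynomial.X i)

/-! Send `x_i` to `g_i / a^{d_i}`. The image of this map is the dilatation and its kernel contains
the relations; conversely, modulo the relations some power of `a` times any polynomial is a
constant, so the kernel is exactly the relation ideal once `a` is a non-zero-divisor modulo the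
relations. That follows by induction on the number of relations: if `a` is regular modulo `J` and
`g` is regular modulo `J + (a)`, then `a` is regular modulo `J + (g - a t)`. Since all `d_i > 0`,
the first `k` relations together with `a` generate `(a, g_1, …, g_k)`, and regularity of
`g_{k+1}` modulo this ideal passes from `A` to `A[x]` coefficientwise. -/

open MvPolynomial

section RegularElements

variable {R : Type*} [CommRing R]

theorem Ideal.Quotient.mk_mem_nonZeroDivisors_iff {I : Ideal R} {c : R} :
    Ideal.Quotient.mk I c ∈ nonZeroDivisors (R ⧸ I) ↔ ∀ x, c * x ∈ I → x ∈ I := by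
  simp only [mem_nonZeroDivisors_iff_left, Ideal.Quotient.mk_surjective.forall, ← map_mul,
    Ideal.Quotient.eq_zero_iff_mem]

theorem MvPolynomial.mem_map_C_of_C_mul_mem {σ : Type*} {I : Ideal R} {c : R}
    (hc : ∀ x, c * x ∈ I → x ∈ I) {p : MvPolynomial σ R} (hp : C c * p ∈ I.map C) :
    p ∈ I.map C := by
  rw [mem_map_C_iff] at hp ⊢
  intro m
  exact hc _ (by simpa only [coeff_C_mul] using hp m)

theorem mem_sup_span_sub_mul_of_mul_mem {J : Ideal R} {a g t : R}
    (ha : ∀ x, a * x ∈ J → x ∈ J)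
    (hg : ∀ x, g * x ∈ J ⊔ Ideal.span {a} → x ∈ J ⊔ Ideal.span {a})
    {p : R} (hp : a * p ∈ J ⊔ Ideal.span {g - a * t}) :
    p ∈ J ⊔ Ideal.span {g - a * t} := by
  obtain ⟨r, hr, _, hz, hrq⟩ := Submodule.mem_sup.mp hp
  obtain ⟨q, rfl⟩ := Ideal.mem_span_singleton'.mp hz
  have hq : g * q ∈ J ⊔ Ideal.span {a} := by
    rw [show g * q = a * (p + q * t) - r by linear_combination hrq]
    exact sub_mem (Ideal.mem_sup_right (Ideal.mul_mem_right _ _ (Ideal.mem_span_singleton_self a)))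
      (Ideal.mem_sup_left hr)
  obtain ⟨s, hs, _, hz', hsq⟩ := Submodule.mem_sup.mp (hg q hq)
  obtain ⟨q', rfl⟩ := Ideal.mem_span_singleton'.mp hz'
  have hp' : p - q' * (g - a * t) ∈ J := ha _ <| by
    rw [show a * (p - q' * (g - a * t)) = r + s * (g - a * t) by
      linear_combination -hrq - (g - a * t) * hsq]
    exact add_mem hr (J.mul_mem_right _ hs)
  rw [← sub_add_cancel p (q' * (g - a * t))]
  exact add_mem (Ideal.mem_sup_left hp')
    (Ideal.mem_sup_right (Ideal.mul_mem_left _ _ (Ideal.mem_span_singleton_self _)))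

theorem Ideal.span_image_sup_span_singleton_le {ι : Type*} {x y : ι → R} {a : R} {S : Set ι}
    (h : ∀ i ∈ S, x i - y i ∈ Ideal.span {a}) :
    Ideal.span (x '' S) ⊔ Ideal.span {a} ≤ Ideal.span (y '' S) ⊔ Ideal.span {a} := by
  refine sup_le (Ideal.span_le.mpr ?_) le_sup_right
  rintro _ ⟨i, hi, rfl⟩
  rw [← sub_add_cancel (x i) (y i), add_comm]
  exact add_mem (Ideal.mem_sup_left (Ideal.subset_span ⟨i, hi, rfl⟩))
    (Ideal.mem_sup_right (h i hi))

theorem Ideal.span_image_sup_span_singleton_congr {ι : Type*} {x y : ι → R} {a : R}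
    {S : Set ι} (h : ∀ i ∈ S, x i - y i ∈ Ideal.span {a}) :
    Ideal.span (x '' S) ⊔ Ideal.span {a} = Ideal.span (y '' S) ⊔ Ideal.span {a} :=
  le_antisymm (Ideal.span_image_sup_span_singleton_le h)
    (Ideal.span_image_sup_span_singleton_le fun i hi => by
      rw [← neg_sub]; exact neg_mem (h i hi))

end RegularElements

section RelationIdeal

variable {n : ℕ} {a : A} {g : Fin n → A} {d : Fin n → ℕ}

def relIdealBelow (n : ℕ) (a : A) (g : Fin n → A) (d : Fin n → ℕ) (k : ℕ) :
    Ideal (MvPolynomial (Fin n) A) :=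
  Ideal.span ((fun i => C (g i) - C (a ^ d i) * X i) '' {i : Fin n | (i : ℕ) < k})

theorem relIdealBelow_zero : relIdealBelow n a g d 0 = ⊥ := by
  simp [relIdealBelow]

theorem relIdealBelow_self : relIdealBelow n a g d n = relIdeal n a g d := by
  simp [relIdealBelow, relIdeal, Set.image_univ]

theorem relIdealBelow_succ {k : ℕ} (hk : k < n) :
    relIdealBelow n a g d (k + 1) = relIdealBelow n a g d k ⊔
      Ideal.span {C (g ⟨k, hk⟩) - C (a ^ d ⟨k, hk⟩) * X ⟨k, hk⟩} := by
  have : {i : Fin n | (i : ℕ) < k + 1} = insert (⟨k, hk⟩ : Fin n) {i : Fin n | (i : ℕ) < k} := by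
    ext i
    simp only [Order.lt_add_one_iff, Set.mem_ofPred_eq, Set.mem_insert_iff, Fin.ext_iff]
    omega
  rw [relIdealBelow, this, Set.image_insert_eq, Ideal.span_insert, sup_comm, relIdealBelow]

theorem prevIdeal_zero : prevIdeal n a g 0 = ⊥ := by
  simp [prevIdeal]

theorem prevIdeal_succ {k : ℕ} (hk : k < n) :
    prevIdeal n a g ⟨k + 1, by omega⟩ = Ideal.span (insert a (g '' {i | (i : ℕ) < k})) := by
  rw [prevIdeal]
  congr 1
  ext x
  constructor
  · rintro ⟨j, hj, rfl⟩
    cases j using Fin.cases with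
    | zero => exact Or.inl rfl
    | succ i => exact Or.inr ⟨i, by simpa [Fin.lt_def] using hj, by simp⟩
  · rintro (rfl | ⟨i, hi, rfl⟩)
    · exact ⟨0, by simp [Fin.lt_def], rfl⟩
    · exact ⟨i.succ, by simpa [Fin.lt_def] using hi, by simp⟩

theorem C_pow_mul_X_eq (hd : ∀ i, 0 < d i) (i : Fin n) :
    (C (a ^ d i) * X i : MvPolynomial (Fin n) A) = C a * (C (a ^ (d i - 1)) * X i) := by
  rw [← mul_assoc, ← map_mul, ← pow_succ', Nat.sub_add_cancel (hd i)]

theorem map_C_prevIdeal_succ (hd : ∀ i, 0 < d i) {k : ℕ} (hk : k < n) :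
    (prevIdeal n a g ⟨k + 1, by omega⟩).map C = relIdealBelow n a g d k ⊔ Ideal.span {C a} := by
  rw [prevIdeal_succ hk, Ideal.map_span, Set.image_insert_eq, Set.image_image,
    Ideal.span_insert, sup_comm, relIdealBelow]
  refine Ideal.span_image_sup_span_singleton_congr fun i _ => ?_
  rw [C_pow_mul_X_eq hd, sub_sub_cancel]
  exact Ideal.mul_mem_right _ _ (Ideal.mem_span_singleton_self _)

theorem mem_relIdealBelow_of_C_mul_mem (hd : ∀ i, 0 < d i)
    (hreg : ∀ k : Fin (n + 1),
      Ideal.Quotient.mk (prevIdeal n a g k) (Fin.cases a g k)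
        ∈ nonZeroDivisors (A ⧸ prevIdeal n a g k)) :
    ∀ k ≤ n, ∀ p, C a * p ∈ relIdealBelow n a g d k → p ∈ relIdealBelow n a g d k
  | 0, _, p, hp => by
    rw [relIdealBelow_zero, ← Ideal.map_bot (f := C), ← prevIdeal_zero (g := g)] at hp ⊢
    exact mem_map_C_of_C_mul_mem (Ideal.Quotient.mk_mem_nonZeroDivisors_iff.mp (hreg 0)) hp
  | k + 1, hk, p, hp => by
    rw [relIdealBelow_succ hk, C_pow_mul_X_eq hd] at hp ⊢
    refine mem_sup_span_sub_mul_of_mul_mem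
      (mem_relIdealBelow_of_C_mul_mem hd hreg k (by omega)) (fun x hx => ?_) hp
    rw [← map_C_prevIdeal_succ hd hk] at hx ⊢
    have hg := Ideal.Quotient.mk_mem_nonZeroDivisors_iff.mp (hreg ⟨k + 1, by omega⟩)
    exact mem_map_C_of_C_mul_mem (fun y hy => hg y (by simpa using hy)) hx

theorem mk_C_mem_nonZeroDivisors (hd : ∀ i, 0 < d i)
    (hreg : ∀ k : Fin (n + 1),
      Ideal.Quotient.mk (prevIdeal n a g k) (Fin.cases a g k)
        ∈ nonZeroDivisors (A ⧸ prevIdeal n a g k)) :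
    Ideal.Quotient.mk (relIdeal n a g d) (C a) ∈
      nonZeroDivisors (MvPolynomial (Fin n) A ⧸ relIdeal n a g d) := by
  rw [Ideal.Quotient.mk_mem_nonZeroDivisors_iff, ← relIdealBelow_self]
  exact mem_relIdealBelow_of_C_mul_mem hd hreg n le_rfl

theorem exists_C_pow_mul_sub_C_mem_relIdeal (F : MvPolynomial (Fin n) A) :
    ∃ (N : ℕ) (c : A), C a ^ N * F - C c ∈ relIdeal n a g d := by
  induction F using MvPolynomial.induction_on with
  | C c => exact ⟨0, c, by simp⟩
  | add p q hp hq =>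
    obtain ⟨N₁, c₁, h₁⟩ := hp
    obtain ⟨N₂, c₂, h₂⟩ := hq
    refine ⟨N₁ + N₂, a ^ N₂ * c₁ + a ^ N₁ * c₂, ?_⟩
    rw [show C a ^ (N₁ + N₂) * (p + q) - C (a ^ N₂ * c₁ + a ^ N₁ * c₂) =
        C a ^ N₂ * (C a ^ N₁ * p - C c₁) + C a ^ N₁ * (C a ^ N₂ * q - C c₂) by
      simp only [map_add, map_mul, map_pow]; ring]
    exact add_mem (Ideal.mul_mem_left _ _ h₁) (Ideal.mul_mem_left _ _ h₂)
  | mul_X p i hp =>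
    obtain ⟨N, c, h⟩ := hp
    refine ⟨N + d i, c * g i, ?_⟩
    rw [show C a ^ (N + d i) * (p * X i) - C (c * g i) =
        C (a ^ d i) * X i * (C a ^ N * p - C c) - C c * (C (g i) - C (a ^ d i) * X i) by
      simp only [map_mul, map_pow]; ring]
    exact sub_mem (Ideal.mul_mem_left _ _ h) (Ideal.mul_mem_left _ _ (Ideal.subset_span ⟨i, rfl⟩))

theorem dilSubmonoid_le_nonZeroDivisors {b : I → A}
    (hb : ∀ i, b i ∈ nonZeroDivisors A) : dilSubmonoid b ≤ nonZeroDivisors A :=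
  Submonoid.closure_le.mpr (Set.range_subset_iff.mpr hb)

variable (n a g d) in
def fracEval : MvPolynomial (Fin n) A →ₐ[A] Localization (dilSubmonoid fun i : Fin n => a ^ d i) :=
  aeval fun i => dilFrac (fun i => a ^ d i) i (g i)

theorem relIdeal_le_ker_fracEval : relIdeal n a g d ≤ RingHom.ker (fracEval n a g d) := by
  rw [relIdeal, Ideal.span_le]
  rintro _ ⟨i, rfl⟩
  simp only [SetLike.mem_coe, RingHom.mem_ker, fracEval, map_sub, map_mul, aeval_C, aeval_X,
    dilFrac, Localization.mk_eq_mk'_apply]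
  exact sub_eq_zero.mpr (IsLocalization.mk'_spec' _ _ _).symm

theorem ker_fracEval (hd : ∀ i, 0 < d i)
    (hreg : ∀ k : Fin (n + 1),
      Ideal.Quotient.mk (prevIdeal n a g k) (Fin.cases a g k)
        ∈ nonZeroDivisors (A ⧸ prevIdeal n a g k)) :
    RingHom.ker (fracEval n a g d) = relIdeal n a g d := by
  refine le_antisymm (fun F hF => ?_) relIdeal_le_ker_fracEval
  have ha : a ∈ nonZeroDivisors A := by
    have h0 := Ideal.Quotient.mk_mem_nonZeroDivisors_iff.mp (hreg 0)
    simp only [prevIdeal_zero, Ideal.mem_bot, Fin.cases_zero] at h0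
    exact mem_nonZeroDivisors_iff_left.mpr h0
  obtain ⟨N, c, hNc⟩ := exists_C_pow_mul_sub_C_mem_relIdeal (a := a) (g := g) (d := d) F
  have hc : c = 0 := by
    refine IsLocalization.injective (Localization (dilSubmonoid fun i : Fin n => a ^ d i))
      (dilSubmonoid_le_nonZeroDivisors fun i => pow_mem ha (d i)) ?_
    simpa [RingHom.mem_ker.mp hF] using relIdeal_le_ker_fracEval hNc
  rw [hc, map_zero, sub_zero, ← Ideal.Quotient.eq_zero_iff_mem, map_mul, map_pow] at hNc
  rw [← Ideal.Quotient.eq_zero_iff_mem]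
  exact (mul_left_mem_nonZeroDivisors_eq_zero_iff
    (pow_mem (mk_C_mem_nonZeroDivisors hd hreg) N)).mp hNc

theorem range_fracEval :
    (fracEval n a g d).range = dilatation (fun i => Ideal.span {g i}) (fun i => a ^ d i) := by
  rw [fracEval, ← Algebra.adjoin_range_eq_range_aeval, dilatation]
  apply le_antisymm
  · apply Algebra.adjoin_mono
    rintro _ ⟨i, rfl⟩
    exact Set.mem_iUnion.mpr ⟨i, g i, Ideal.mem_span_singleton_self _, rfl⟩
  · apply Algebra.adjoin_le
    rintro _ ⟨_, ⟨i, rfl⟩, _, hm, rfl⟩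
    obtain ⟨c, rfl⟩ := Ideal.mem_span_singleton'.mp hm
    rw [show dilFrac (fun i => a ^ d i) i (c * g i) =
        algebraMap A _ c * dilFrac (fun i => a ^ d i) i (g i) by
      rw [dilFrac, dilFrac, ← Localization.mk_one_eq_algebraMap, Localization.mk_mul, one_mul]]
    exact mul_mem (Subalgebra.algebraMap_mem _ c) (Algebra.subset_adjoin (Set.mem_range_self i))

end RelationIdeal

/-- if `a, g_1, …, g_n` is a regular sequence (each term a non-zero-divisor
modulo the ideal generated by the previous ones) and the `d_i` are positive, then
`A[(g_1)/a^{d_1}, …, (g_n)/a^{d_n}] ≅ A[x_1,…,x_n]/(g_i − a^{d_i}x_i)` as `A`-algebras; in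
particular the latter has no `a`-power torsion. -/
theorem stmt17 (n : ℕ) (a : A) (g : Fin n → A) (d : Fin n → ℕ) (hd : ∀ i, 0 < d i)
    (hreg : ∀ k : Fin (n + 1),
      Ideal.Quotient.mk (prevIdeal n a g k) (Fin.cases a g k)
        ∈ nonZeroDivisors (A ⧸ prevIdeal n a g k)) :
    Nonempty ((MvPolynomial (Fin n) A ⧸ relIdeal n a g d)
      ≃ₐ[A] ↥(dilatation (fun i => Ideal.span {g i}) (fun i => a ^ d i))) ∧
    ∀ x : MvPolynomial (Fin n) A ⧸ relIdeal n a g d,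
      (∃ k : ℕ, algebraMap A _ (a ^ k) * x = 0) → x = 0 := by
  refine ⟨⟨(Ideal.quotientEquivAlgOfEq A (ker_fracEval hd hreg).symm).trans
      ((Ideal.quotientKerEquivRange (fracEval n a g d)).trans
        (Subalgebra.equivOfEq _ _ range_fracEval))⟩, ?_⟩
  rintro x ⟨k, hk⟩
  rw [← Ideal.Quotient.mk_algebraMap, MvPolynomial.algebraMap_eq, map_pow, map_pow] at hk
  exact (mul_left_mem_nonZeroDivisors_eq_zero_iff
    (pow_mem (mk_C_mem_nonZeroDivisors hd hreg) k)).mp hk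
end
end
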